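/- Lower bounds on the total-variation distance between quantal responses. Let Q, Q̃ : B → ℝ with ν = ν_Q, ν̃ = ν_{Q̃}, A = A_Q, Ã = A_{Q̃}. Then: (i) D_TV(ν, ν̃) ≥ (1/2)·Σ_{b∈B} ν(b)·η·exp(−η·|Ã(b) − A(b)|)·|Ã(b) − A(b)|; and (ii) if moreover B_A > 0 satisfies ‖A‖_∞ ≤ B_A and ‖Ã‖_∞ ≤ B_A, then D_TV(ν, ν̃) ≥ (η / (2·(1 + 2ηB_A)))·Σ_{b∈B} ν(b)·|Ã(b) − A(b)|. -/

import Mathlib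

/-! Since `ν̃(b) = ν(b)·exp(η(Ã(b) − A(b)))`, each term of the total-variation sum is
`ν(b)·|exp x − 1|` with `x = η(Ã(b) − A(b))`, and `|exp x − 1| ≥ 1 − exp(−|x|)`.
Both bounds are then pointwise consequences of `(1 + y)·exp(−y) ≤ 1`, i.e. of `1 + y ≤ exp y`:
it gives `y·exp(−y) ≤ 1 − exp(−y)`, and `y/(1 + T) ≤ 1 − exp(−y)` for `0 ≤ y ≤ T`, where in (ii)
`T = 2ηB_A` by the triangle inequality. -/

open Finset

noncomputable section

namespace QSE6

variable {B : Type*} [Fintype B]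

/-- Soft value `V(Q) = η⁻¹ log Σ_b exp(η Q b)`. -/
def softVal (η : ℝ) (Q : B → ℝ) : ℝ := η⁻¹ * Real.log (∑ b, Real.exp (η * Q b))

/-- Advantage `A_Q(b) = Q b − V(Q)`. -/
def adv (η : ℝ) (Q : B → ℝ) (b : B) : ℝ := Q b - softVal η Q

/-- Quantal response `ν_Q(b) = exp(η A_Q(b))`. -/
def qres (η : ℝ) (Q : B → ℝ) (b : B) : ℝ := Real.exp (η * adv η Q b)

/-- Total-variation distance between (densities of) distributions on `B`. -/
def dTV (p q : B → ℝ) : ℝ := (1 / 2) * ∑ b, |p b - q b|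

end QSE6

open Real

namespace Real

theorem one_add_mul_exp_neg_le_one (y : ℝ) : (1 + y) * exp (-y) ≤ 1 := by
  calc (1 + y) * exp (-y) ≤ exp y * exp (-y) := by
        gcongr; linarith [add_one_le_exp y]
    _ = 1 := by rw [← exp_add, add_neg_cancel, exp_zero]

theorem mul_exp_neg_le_one_sub_exp_neg (y : ℝ) : y * exp (-y) ≤ 1 - exp (-y) := by
  linarith [one_add_mul_exp_neg_le_one y]

theorem div_one_add_le_one_sub_exp_neg {y T : ℝ} (hy : 0 ≤ y) (hyT : y ≤ T) :
    y / (1 + T) ≤ 1 - exp (-y) := by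
  rw [div_le_iff₀ (by linarith)]
  nlinarith [one_add_mul_exp_neg_le_one y, exp_pos (-y)]

theorem one_sub_exp_neg_abs_le_abs_exp_sub_one (x : ℝ) : 1 - exp (-|x|) ≤ |exp x - 1| := by
  rcases le_or_gt 0 x with hx | hx
  · rw [abs_of_nonneg hx, abs_of_nonneg (sub_nonneg.2 (one_le_exp hx))]
    linarith [add_one_le_exp x, add_one_le_exp (-x)]
  · rw [abs_of_neg hx, neg_neg, abs_sub_comm, abs_of_nonneg (sub_nonneg.2 (exp_le_one_iff.2 hx.le))]

end Real

namespace QSE6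

variable {B : Type*} [Fintype B]

theorem qres_pos (η : ℝ) (Q : B → ℝ) (b : B) : 0 < qres η Q b := exp_pos _

theorem qres_eq_mul_exp (η : ℝ) (Q Qt : B → ℝ) (b : B) :
    qres η Qt b = qres η Q b * exp (η * (adv η Qt b - adv η Q b)) := by
  rw [qres, qres, ← exp_add]
  ring_nf

theorem half_sum_qres_mul_le_dTV {η : ℝ} (hη : 0 ≤ η) {Q Qt : B → ℝ} (f : B → ℝ)
    (hf : ∀ b, f b ≤ 1 - exp (-(η * |adv η Qt b - adv η Q b|))) :
    (1 / 2) * ∑ b, qres η Q b * f b ≤ dTV (qres η Q) (qres η Qt) := by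
  unfold dTV
  gcongr with b
  have hx := one_sub_exp_neg_abs_le_abs_exp_sub_one (η * (adv η Qt b - adv η Q b))
  rw [abs_mul, abs_of_nonneg hη] at hx
  rw [qres_eq_mul_exp η Q Qt b, ← mul_one_sub, abs_mul, abs_of_pos (qres_pos η Q b), abs_sub_comm 1]
  exact mul_le_mul_of_nonneg_left ((hf b).trans hx) (qres_pos η Q b).le

theorem tv_lower_bounds_quantal_general
    {B : Type*} [Fintype B]
    (η : ℝ) (hη : 0 < η) (Q Qt : B → ℝ) :
    dTV (qres η Q) (qres η Qt) ≥
      (1 / 2) * ∑ b, qres η Q b *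
        (η * Real.exp (-(η * |adv η Qt b - adv η Q b|)) * |adv η Qt b - adv η Q b|) ∧
    (∀ BA : ℝ, 0 < BA → (∀ b, |adv η Q b| ≤ BA) → (∀ b, |adv η Qt b| ≤ BA) →
      dTV (qres η Q) (qres η Qt) ≥
        η / (2 * (1 + 2 * η * BA)) * ∑ b, qres η Q b * |adv η Qt b - adv η Q b|) := by
  refine ⟨half_sum_qres_mul_le_dTV hη.le _ fun b ↦ ?_, fun BA _ hA hAt ↦ ?_⟩
  · linarith [mul_exp_neg_le_one_sub_exp_neg (η * |adv η Qt b - adv η Q b|)]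
  · have hrw : η / (2 * (1 + 2 * η * BA)) * ∑ b, qres η Q b * |adv η Qt b - adv η Q b|
        = 1 / 2 * ∑ b, qres η Q b * (η * |adv η Qt b - adv η Q b| / (1 + 2 * η * BA)) := by
      rw [mul_sum, mul_sum]
      refine sum_congr rfl fun b _ ↦ ?_
      field_simp
    rw [ge_iff_le, hrw]
    refine half_sum_qres_mul_le_dTV hη.le _ fun b ↦
      div_one_add_le_one_sub_exp_neg (by positivity) ?_
    have := (abs_sub (adv η Qt b) (adv η Q b)).trans (add_le_add (hAt b) (hA b))
    nlinarith

/-- Lower bounds on the TV distance between quantal responses: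
(i) `D_TV(ν,ν̃) ≥ (1/2) Σ_b ν(b) η exp(−η|Ã−A|)|Ã−A|`, and
(ii) if `‖A‖_∞ ≤ B_A` and `‖Ã‖_∞ ≤ B_A` then
`D_TV(ν,ν̃) ≥ (η/(2(1+2ηB_A))) Σ_b ν(b)|Ã−A|`. -/
theorem tv_lower_bounds_quantal
    {B : Type*} [Fintype B] [Nonempty B]
    (η : ℝ) (hη : 0 < η) (Q Qt : B → ℝ) :
    dTV (qres η Q) (qres η Qt) ≥
      (1 / 2) * ∑ b, qres η Q b *
        (η * Real.exp (-(η * |adv η Qt b - adv η Q b|)) * |adv η Qt b - adv η Q b|) ∧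
    (∀ BA : ℝ, 0 < BA → (∀ b, |adv η Q b| ≤ BA) → (∀ b, |adv η Qt b| ≤ BA) →
      dTV (qres η Q) (qres η Qt) ≥
        η / (2 * (1 + 2 * η * BA)) * ∑ b, qres η Q b * |adv η Qt b - adv η Q b|) :=
  tv_lower_bounds_quantal_general η hη Q Qt

end QSE6
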